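/- For the collinear equilibria of the CR3BP on the x-axis to the right of both primaries (the L2-type region x > 1−μ), the equilibrium condition x − (1−μ)/(x+μ)² − μ/(x−1+μ)² = 0 has exactly one solution with x > 1 − μ, for any μ ∈ (0,1). -/
import Mathlib

/-- The L2 function is strictly increasing on `(1-μ, ∞)`. -/
lemma L2_strict_mono (μ x y : ℝ) (hμ : 0 < μ) (hμ' : μ < 1) (hx : 1 - μ < x)
    (hxy : x < y) :
    x - (1 - μ) / (x + μ) ^ 2 - μ / (x - 1 + μ) ^ 2 <
      y - (1 - μ) / (y + μ) ^ 2 - μ / (y - 1 + μ) ^ 2 := by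
  have h1 : (0:ℝ) < x + μ := by linarith
  have h2 : (0:ℝ) < x - 1 + μ := by linarith
  have e1 : (1 - μ) / (y + μ) ^ 2 ≤ (1 - μ) / (x + μ) ^ 2 := by
    apply div_le_div_of_nonneg_left (by linarith) (by positivity)
    nlinarith
  have e2 : μ / (y - 1 + μ) ^ 2 ≤ μ / (x - 1 + μ) ^ 2 := by
    apply div_le_div_of_nonneg_left hμ.le (by positivity)
    nlinarith
  linarith

/-- The L2-type collinear equilibrium equation has exactly one solution with
`x > 1 - μ`, for any `μ ∈ (0,1)`. -/
theorem L2_exists_unique (μ : ℝ) (hμ : 0 < μ) (hμ' : μ < 1) :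
    ∃! x : ℝ, 1 - μ < x ∧
      x - (1 - μ) / (x + μ) ^ 2 - μ / (x - 1 + μ) ^ 2 = 0 := by
  have hs : 0 < Real.sqrt μ := Real.sqrt_pos.mpr hμ
  have hsq : Real.sqrt μ ^ 2 = μ := Real.sq_sqrt hμ.le
  have hs1 : Real.sqrt μ < 1 := by nlinarith [Real.sqrt_nonneg μ]
  obtain ⟨a, ha⟩ : ∃ a : ℝ, a = 1 - μ + Real.sqrt μ / 2 := ⟨_, rfl⟩
  have hab : a < 2 := by rw [ha]; linarith
  have ha1 : 1 - μ < a := by rw [ha]; linarith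
  have haμ : (0:ℝ) < a + μ := by linarith
  -- value at a is negative
  have hfa : a - (1 - μ) / (a + μ) ^ 2 - μ / (a - 1 + μ) ^ 2 ≤ 0 := by
    have hden : a - 1 + μ = Real.sqrt μ / 2 := by rw [ha]; ring
    have h4 : μ / (a - 1 + μ) ^ 2 = 4 := by
      rw [hden]
      rw [div_pow, div_eq_iff (by positivity)]
      nlinarith
    have hpos : 0 < (1 - μ) / (a + μ) ^ 2 :=
      div_pos (by linarith) (by positivity)
    rw [h4]
    linarith
  -- value at 2 is positive
  have hfb : (0:ℝ) ≤ 2 - (1 - μ) / (2 + μ) ^ 2 - μ / (2 - 1 + μ) ^ 2 := by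
    have e1 : (1 - μ) / (2 + μ) ^ 2 < 1 := by
      rw [div_lt_one (by positivity)]; nlinarith
    have e2 : μ / (2 - 1 + μ) ^ 2 < 1 := by
      rw [div_lt_one (by positivity)]; nlinarith
    linarith
  -- continuity on [a, 2]
  have hc : ContinuousOn
      (fun x : ℝ => x - (1 - μ) / (x + μ) ^ 2 - μ / (x - 1 + μ) ^ 2)
      (Set.Icc a 2) := by
    apply ContinuousOn.sub
    apply ContinuousOn.sub continuousOn_id
    · exact ContinuousOn.div continuousOn_const (by fun_prop)
        (fun x hx => by have := hx.1; have hxp : (0:ℝ) < x + μ := by linarith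
                        positivity)
    · exact ContinuousOn.div continuousOn_const (by fun_prop)
        (fun x hx => by have h := hx.1; have : (0:ℝ) < x - 1 + μ := by linarith
                        positivity)
  -- intermediate value theorem
  obtain ⟨x0, hx0mem, hx0⟩ := intermediate_value_Icc hab.le hc
    (Set.mem_Icc.mpr ⟨hfa, hfb⟩)
  have hx0gt : 1 - μ < x0 := lt_of_lt_of_le ha1 hx0mem.1
  have hx0 : x0 - (1 - μ) / (x0 + μ) ^ 2 - μ / (x0 - 1 + μ) ^ 2 = 0 := hx0
  refine ⟨x0, ⟨hx0gt, hx0⟩, ?_⟩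
  rintro y ⟨hy1, hy2⟩
  rcases lt_trichotomy y x0 with h | h | h
  · exfalso
    have := L2_strict_mono μ y x0 hμ hμ' hy1 h
    rw [hy2, hx0] at this
    exact lt_irrefl 0 this
  · exact h
  · exfalso
    have := L2_strict_mono μ x0 y hμ hμ' hx0gt h
    rw [hy2, hx0] at this
    exact lt_irrefl 0 this
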